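/- For p > 0 and u > 0 define the stability predicate S(p,u) := [ u ≤ (1 − p u)² and (1 − p u)² ≤ 1 ] or [ u > (1 − p u)² and u · e^{(1 − p u)²/u − 1} ≤ 1 ]. If p ≥ 2, then for every u > 0, S(p,u) holds if and only if u ≤ 2/p. Consequently, for the pseudo-explicit Euler scheme with linear driver f(y,z) = a y + Σ b_ℓ z^ℓ, a < 0, b ≠ 0, if −a/|b|_∞² ≥ 2 then the scheme is Von Neumann stable if and only if h ≤ −2/a. -/

import Mathlib

/-- For `b ∈ ℝ^d`, `|b|_∞ := max(|b⁺|, |b⁻|)` where `b⁺ = (b₁ ∨ 0, …, b_d ∨ 0)`,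
`b⁻ = (b₁ ∧ 0, …, b_d ∧ 0)` and `|·|` is the Euclidean norm. -/
noncomputable def bInfty {d : ℕ} (b : Fin d → ℝ) : ℝ :=
  max (Real.sqrt (∑ ℓ, max (b ℓ) 0 ^ 2)) (Real.sqrt (∑ ℓ, min (b ℓ) 0 ^ 2))

/-- The Von Neumann stability predicate of the pseudo-explicit Euler scheme in the
variables `p = -a/|b|_∞²`, `u = |b|_∞² h` (note `(1 + a h)² = (1 - p u)²`). -/
noncomputable def SpredVN (p u : ℝ) : Prop :=
  (u ≤ (1 - p * u) ^ 2 ∧ (1 - p * u) ^ 2 ≤ 1) ∨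
    ((1 - p * u) ^ 2 < u ∧ u * Real.exp ((1 - p * u) ^ 2 / u - 1) ≤ 1)

/-!
Both disjuncts of `S(p,u)` force `(1 - p u)² ≤ 1`, the second because
`c ≤ u e^{c/u - 1}` for `c = (1 - p u)²` (that is, `x ≤ e^{x-1}`); conversely, when `u ≤ 1` and `(1 - p u)² ≤ 1`, either the first
disjunct holds or the exponent `c/u - 1` is negative. For `p ≥ 2` the condition
`(1 - p u)² ≤ 1`, i.e. `p u ≤ 2`, already gives `u ≤ 1`.

For the scheme, the amplification factor at `x = 0` is `(1 + a h)²`, which gives necessity.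
For sufficiency, splitting `b = b⁺ + b⁻` and applying Cauchy–Schwarz to each part bounds
`(∑ b_ℓ √x_ℓ)²` by `|b|_∞² ∑ x_ℓ`, so the factor is at most `e^{-s} (1 + s) ≤ 1`
with `s = ∑ x_ℓ`, as soon as `h |b|_∞² ≤ 1`; this follows from `h ≤ -2/a` and `-a ≥ 2|b|_∞²`.
-/

open Real Finset

lemma sq_one_sub_le_one_iff {t : ℝ} (ht : 0 ≤ t) : (1 - t) ^ 2 ≤ 1 ↔ t ≤ 2 := by
  constructor <;> intro h <;> nlinarith

lemma le_mul_exp_div_sub_one {u : ℝ} (hu : 0 < u) (c : ℝ) : c ≤ u * exp (c / u - 1) :=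
  calc c = u * (c / u - 1 + 1) := by field_simp; ring
    _ ≤ u * exp (c / u - 1) := mul_le_mul_of_nonneg_left (add_one_le_exp _) hu.le

lemma exp_neg_mul_one_add_le_one (s : ℝ) : exp (-s) * (1 + s) ≤ 1 :=
  calc exp (-s) * (1 + s) ≤ exp (-s) * exp s := by gcongr; linarith [add_one_le_exp s]
    _ = 1 := by rw [← exp_add, neg_add_cancel, exp_zero]

lemma SpredVN.sq_le_one {p u : ℝ} (hu : 0 < u) (h : SpredVN p u) : (1 - p * u) ^ 2 ≤ 1 := by
  rcases h with ⟨-, h⟩ | ⟨-, h⟩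
  · exact h
  · exact (le_mul_exp_div_sub_one hu _).trans h

lemma spredVN_of_sq_le_one {p u : ℝ} (hu : 0 < u) (hu1 : u ≤ 1) (h : (1 - p * u) ^ 2 ≤ 1) :
    SpredVN p u := by
  rcases le_or_gt u ((1 - p * u) ^ 2) with hle | hlt
  · exact Or.inl ⟨hle, h⟩
  · refine Or.inr ⟨hlt, ?_⟩
    have hexponent : (1 - p * u) ^ 2 / u - 1 ≤ 0 := by
      rw [sub_nonpos, div_le_one hu]; exact hlt.le
    calc u * exp ((1 - p * u) ^ 2 / u - 1) ≤ u * exp 0 := by gcongr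
      _ ≤ 1 := by rwa [exp_zero, mul_one]

lemma spredVN_iff_le_two_div {p u : ℝ} (hp : 2 ≤ p) (hu : 0 < u) :
    SpredVN p u ↔ u ≤ 2 / p := by
  have hp0 : 0 < p := by linarith
  have hsq : (1 - p * u) ^ 2 ≤ 1 ↔ u ≤ 2 / p := by
    rw [sq_one_sub_le_one_iff (by positivity), le_div_iff₀ hp0, mul_comm]
  refine ⟨fun h => hsq.1 (h.sq_le_one hu), fun h => spredVN_of_sq_le_one hu ?_ (hsq.2 h)⟩
  exact h.trans ((div_le_one hp0).2 hp)

lemma one_add_mul_sq_le_one_iff {a h : ℝ} (ha : a < 0) (hh : 0 < h) :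
    (1 + a * h) ^ 2 ≤ 1 ↔ h ≤ -2 / a := by
  rw [show 1 + a * h = 1 - -a * h by ring, sq_one_sub_le_one_iff (by nlinarith),
    le_div_iff_of_neg ha]
  constructor <;> intro <;> linarith

lemma sq_add_le_max_sq {P N : ℝ} (hP : 0 ≤ P) (hN : N ≤ 0) : (P + N) ^ 2 ≤ max (P ^ 2) (N ^ 2) := by
  rcases le_total 0 (P + N) with h | h
  · exact le_max_of_le_left (by nlinarith)
  · exact le_max_of_le_right (by nlinarith)

lemma sq_sum_mul_le_max_mul {ι : Type*} [Fintype ι] (b y : ι → ℝ) (hy : ∀ i, 0 ≤ y i) :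
    (∑ i, b i * y i) ^ 2 ≤
      max (∑ i, max (b i) 0 ^ 2) (∑ i, min (b i) 0 ^ 2) * ∑ i, y i ^ 2 := by
  have hsplit : ∑ i, b i * y i = ∑ i, max (b i) 0 * y i + ∑ i, min (b i) 0 * y i := by
    rw [← sum_add_distrib]
    refine sum_congr rfl fun i _ => ?_
    rw [← add_mul, add_comm, min_add_max, add_zero]
  have hP : 0 ≤ ∑ i, max (b i) 0 * y i :=
    sum_nonneg fun i _ => mul_nonneg (le_max_right _ _) (hy i)
  have hN : ∑ i, min (b i) 0 * y i ≤ 0 :=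
    sum_nonpos fun i _ => mul_nonpos_of_nonpos_of_nonneg (min_le_right _ _) (hy i)
  calc (∑ i, b i * y i) ^ 2
      ≤ max ((∑ i, max (b i) 0 * y i) ^ 2) ((∑ i, min (b i) 0 * y i) ^ 2) :=
        hsplit ▸ sq_add_le_max_sq hP hN
    _ ≤ max ((∑ i, max (b i) 0 ^ 2) * ∑ i, y i ^ 2) ((∑ i, min (b i) 0 ^ 2) * ∑ i, y i ^ 2) :=
        max_le_max (sum_mul_sq_le_sq_mul_sq _ _ _) (sum_mul_sq_le_sq_mul_sq _ _ _)
    _ = _ := (max_mul_of_nonneg _ _ (sum_nonneg fun i _ => sq_nonneg _)).symm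

lemma bInfty_sq {d : ℕ} (b : Fin d → ℝ) :
    bInfty b ^ 2 = max (∑ ℓ, max (b ℓ) 0 ^ 2) (∑ ℓ, min (b ℓ) 0 ^ 2) := by
  rw [bInfty, ← Real.sqrt_monotone.map_max, sq_sqrt]
  exact le_max_of_le_left (sum_nonneg fun _ _ => sq_nonneg _)

lemma sq_sum_mul_sqrt_le_bInfty_sq_mul {d : ℕ} (b x : Fin d → ℝ) (hx : ∀ ℓ, 0 ≤ x ℓ) :
    (∑ ℓ, b ℓ * √(x ℓ)) ^ 2 ≤ bInfty b ^ 2 * ∑ ℓ, x ℓ := by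
  have hsq : ∑ ℓ, √(x ℓ) ^ 2 = ∑ ℓ, x ℓ := sum_congr rfl fun ℓ _ => sq_sqrt (hx ℓ)
  simpa only [bInfty_sq, hsq] using sq_sum_mul_le_max_mul b (fun ℓ => √(x ℓ)) fun ℓ => sqrt_nonneg _

lemma exp_neg_sum_mul_le_one {d : ℕ} (b x : Fin d → ℝ) (hx : ∀ ℓ, 0 ≤ x ℓ) {c h : ℝ}
    (hc : c ≤ 1) (hh : 0 ≤ h) (hbh : h * bInfty b ^ 2 ≤ 1) :
    exp (-∑ ℓ, x ℓ) * (c + h * (∑ ℓ, b ℓ * √(x ℓ)) ^ 2) ≤ 1 := by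
  have hs : 0 ≤ ∑ ℓ, x ℓ := sum_nonneg fun ℓ _ => hx ℓ
  have hterm : h * (∑ ℓ, b ℓ * √(x ℓ)) ^ 2 ≤ ∑ ℓ, x ℓ :=
    calc h * (∑ ℓ, b ℓ * √(x ℓ)) ^ 2 ≤ h * (bInfty b ^ 2 * ∑ ℓ, x ℓ) :=
          mul_le_mul_of_nonneg_left (sq_sum_mul_sqrt_le_bInfty_sq_mul b x hx) hh
      _ ≤ ∑ ℓ, x ℓ := by rw [← mul_assoc]; exact mul_le_of_le_one_left hs hbh
  calc exp (-∑ ℓ, x ℓ) * (c + h * (∑ ℓ, b ℓ * √(x ℓ)) ^ 2)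
      ≤ exp (-∑ ℓ, x ℓ) * (1 + ∑ ℓ, x ℓ) :=
        mul_le_mul_of_nonneg_left (add_le_add hc hterm) (exp_pos _).le
    _ ≤ 1 := exp_neg_mul_one_add_le_one _

/-- For `p ≥ 2` the Von Neumann stability predicate of the pseudo-explicit scheme holds
exactly for `u ≤ 2/p`; consequently, for the linear driver `f(y,z) = a y + Σ b_ℓ z^ℓ`
with `a < 0`, `b ≠ 0` and `−a/|b|_∞² ≥ 2`, the pseudo-explicit Euler scheme is
Von Neumann stable if and only if `h ≤ −2/a`. -/
theorem von_neumann_pseudo_explicit_large_p :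
    (∀ p : ℝ, 2 ≤ p → ∀ u : ℝ, 0 < u → (SpredVN p u ↔ u ≤ 2 / p)) ∧
    (∀ (d : ℕ) (a : ℝ) (b : Fin d → ℝ) (h : ℝ), 1 ≤ d → a < 0 → b ≠ 0 → 0 < h →
      2 ≤ -a / bInfty b ^ 2 →
      ((∀ x : Fin d → ℝ, (∀ ℓ, 0 ≤ x ℓ) →
          Real.exp (-∑ ℓ, x ℓ) *
            ((1 + a * h) ^ 2 + h * (∑ ℓ, b ℓ * Real.sqrt (x ℓ)) ^ 2) ≤ 1)
        ↔ h ≤ -2 / a)) := by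
  refine ⟨fun p hp u hu => spredVN_iff_le_two_div hp hu, ?_⟩
  intro d a b h _ ha _ hh hp
  constructor
  · intro hstable
    refine (one_add_mul_sq_le_one_iff ha hh).1 ?_
    simpa using hstable 0 fun _ => le_rfl
  · intro hle x hx
    have hb : 0 < bInfty b ^ 2 :=
      (sq_nonneg _).lt_of_ne fun h0 => by rw [← h0, div_zero] at hp; norm_num at hp
    have hab : 2 * bInfty b ^ 2 ≤ -a := (le_div_iff₀ hb).1 hp
    have hah : -2 ≤ h * a := (le_div_iff_of_neg ha).1 hle
    have hbh : h * bInfty b ^ 2 ≤ 1 := by nlinarith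
    exact exp_neg_sum_mul_le_one b x hx ((one_add_mul_sq_le_one_iff ha hh).2 hle) hh.le hbh
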